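/- Let f = (f_k)_{k≥0} be a real sequence in ℓ²_{3/4} with ∑_{k≥0} f_k = 0 (the series converges absolutely), and define h_n = ∑_{k=0}^n E_{n−k} f_k. Then there is a constant C > 0 such that |h_n| ≤ C · n^{−3/4} (log n)^{1/2} for all n ≥ 2. -/

import Mathlib

open MeasureTheory Filter Finset

/-- `E_m = (2m)! / (2^(2m) (m!)^2)`, the Taylor coefficients of `(1-z)^(-1/2)`. -/
noncomputable def Ecoef (m : ℕ) : ℝ :=
  (Nat.factorial (2*m)) / (2^(2*m) * (Nat.factorial m)^2)

/-- Membership in the weighted space `ℓ²_r`:  `∑ (1+n)^(2r) |c_n|² < ∞`. -/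
def InEll2 (r : ℝ) (c : ℕ → ℝ) : Prop :=
  Summable (fun n : ℕ => ((1:ℝ) + n) ^ (2*r) * (c n)^2)

lemma Ecoef_pos (m : ℕ) : 0 < Ecoef m := by
  unfold Ecoef
  positivity

lemma Ecoef_succ (m : ℕ) : Ecoef (m+1) = Ecoef m * ((2*(m:ℝ)+1) / (2*(m:ℝ)+2)) := by
  unfold Ecoef
  have h2 : 2*(m+1) = (2*m+1)+1 := by ring
  rw [h2, Nat.factorial_succ, Nat.factorial_succ, Nat.factorial_succ]
  have hfac : (Nat.factorial (2*m) : ℝ) ≠ 0 := Nat.cast_ne_zero.mpr (Nat.factorial_ne_zero _)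
  have hfacm : (Nat.factorial m : ℝ) ≠ 0 := Nat.cast_ne_zero.mpr (Nat.factorial_ne_zero _)
  have hpow : ((2:ℝ)) ^ ((2*m+1)+1) = 2^(2*m) * 4 := by rw [pow_succ, pow_succ]; ring
  push_cast
  rw [hpow]
  field_simp
  ring

lemma Ecoef_sq (m : ℕ) : ((m:ℝ)+1) * Ecoef m ^ 2 ≤ 1 := by
  induction m with
  | zero => simp [Ecoef, Nat.factorial]
  | succ m ih =>
      have hE := Ecoef_succ m
      have hpos : (0:ℝ) < 2*(m:ℝ)+2 := by positivity
      have key : ((m:ℝ)+2) * ((2*(m:ℝ)+1) / (2*(m:ℝ)+2))^2 ≤ (m:ℝ)+1 := by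
        rw [div_pow, ← mul_div_assoc, div_le_iff₀ (by positivity)]
        nlinarith [sq_nonneg ((m:ℝ))]
      have hEm2 : (0:ℝ) ≤ Ecoef m ^ 2 := sq_nonneg _
      have : ((m+1:ℕ):ℝ) + 1 = (m:ℝ)+2 := by push_cast; ring
      rw [this]
      calc ((m:ℝ)+2) * Ecoef (m+1) ^ 2
          = (((m:ℝ)+2) * ((2*(m:ℝ)+1) / (2*(m:ℝ)+2))^2) * Ecoef m ^ 2 := by
            rw [hE]; push_cast; ring
        _ ≤ ((m:ℝ)+1) * Ecoef m ^ 2 := by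
            apply mul_le_mul_of_nonneg_right key hEm2
        _ ≤ 1 := ih


lemma le_of_sq_le_sq'' {a b : ℝ} (ha : 0 ≤ a) (hb : 0 ≤ b) (hab : a^2 ≤ b^2) : a ≤ b := by
  have := Real.sqrt_le_sqrt hab
  rwa [Real.sqrt_sq ha, Real.sqrt_sq hb] at this

lemma rpow_sq (x : ℝ) (hx : 0 < x) (e : ℝ) : (x ^ e)^2 = x ^ (2*e) := by
  rw [sq, ← Real.rpow_add hx]; ring_nf

lemma sqrt_rpow' (x : ℝ) (hx : 0 ≤ x) (e : ℝ) : Real.sqrt (x ^ e) = x ^ (e/2) := by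
  rw [Real.sqrt_eq_rpow, ← Real.rpow_mul hx, mul_one_div]

lemma Ecoef_sq' (m : ℕ) : Ecoef m ^ 2 ≤ 1 / ((m:ℝ)+1) := by
  rw [le_div_iff₀ (by positivity)]
  nlinarith [Ecoef_sq m]

lemma Ecoef_le (m : ℕ) : Ecoef m ≤ ((m:ℝ)+1) ^ (-(1:ℝ)/2) := by
  have hb : (0:ℝ) < (m:ℝ)+1 := by positivity
  apply le_of_sq_le_sq'' (Ecoef_pos m).le (Real.rpow_nonneg hb.le _)
  rw [rpow_sq _ hb]
  have : (2:ℝ) * (-(1:ℝ)/2) = -1 := by norm_num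
  rw [this, Real.rpow_neg_one]
  calc Ecoef m ^ 2 ≤ 1/((m:ℝ)+1) := Ecoef_sq' m
    _ = ((m:ℝ)+1)⁻¹ := one_div _

lemma Ecoef_anti : Antitone Ecoef := by
  apply antitone_nat_of_succ_le
  intro m
  rw [Ecoef_succ m]
  have h1 : (2*(m:ℝ)+1) / (2*(m:ℝ)+2) ≤ 1 := by
    rw [div_le_one (by positivity)]; linarith
  nlinarith [Ecoef_pos m, h1]

lemma Ecoef_diff (m : ℕ) : Ecoef m - Ecoef (m+1) ≤ (1/2) * ((m:ℝ)+1) ^ (-(3:ℝ)/2) := by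
  have hb : (0:ℝ) < (m:ℝ)+1 := by positivity
  have h0 : Ecoef m - Ecoef (m+1) = Ecoef m * (1/(2*(m:ℝ)+2)) := by
    rw [Ecoef_succ m]; field_simp; ring
  rw [h0]
  have h1 : Ecoef m ≤ ((m:ℝ)+1) ^ (-(1:ℝ)/2) := Ecoef_le m
  have h2 : (0:ℝ) ≤ 1/(2*(m:ℝ)+2) := by positivity
  calc Ecoef m * (1/(2*(m:ℝ)+2)) ≤ ((m:ℝ)+1) ^ (-(1:ℝ)/2) * (1/(2*(m:ℝ)+2)) :=
        mul_le_mul_of_nonneg_right h1 h2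
    _ = (1/2) * (((m:ℝ)+1) ^ (-(1:ℝ)/2) * ((m:ℝ)+1)⁻¹) := by
        field_simp
    _ = (1/2) * ((m:ℝ)+1) ^ (-(3:ℝ)/2) := by
        rw [← Real.rpow_neg_one ((m:ℝ)+1), ← Real.rpow_add hb]; norm_num

lemma Ecoef_tele (a d : ℕ) : Ecoef a - Ecoef (a+d) ≤ (d:ℝ) * (1/2) * ((a:ℝ)+1) ^ (-(3:ℝ)/2) := by
  induction d with
  | zero => simp
  | succ d ih =>
      have h2 : Ecoef (a+d) - Ecoef (a+d+1) ≤ (1/2) * (((a:ℝ)+(d:ℝ))+1) ^ (-(3:ℝ)/2) := by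
        have := Ecoef_diff (a+d)
        have hc : ((a+d:ℕ):ℝ) = (a:ℝ)+(d:ℝ) := by push_cast; ring
        rwa [hc] at this
      have h3 : (((a:ℝ)+(d:ℝ))+1) ^ (-(3:ℝ)/2) ≤ ((a:ℝ)+1) ^ (-(3:ℝ)/2) := by
        have hd : (0:ℝ) ≤ (d:ℝ) := Nat.cast_nonneg d
        apply Real.rpow_le_rpow_of_nonpos (by positivity) (by linarith) (by norm_num)
      have h4 : (0:ℝ) ≤ ((a:ℝ)+1) ^ (-(3:ℝ)/2) := Real.rpow_nonneg (by positivity) _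
      have hadd : a + (d+1) = (a+d)+1 := by ring
      rw [hadd]
      push_cast
      nlinarith [ih, h2, h3]

lemma harmonic_le (n : ℕ) (hn : 2 ≤ n) :
    ∑ k ∈ Finset.range (n+1), (1:ℝ)/((k:ℝ)+1) ≤ 4 * Real.log n := by
  have hstep : ∀ k : ℕ, (1:ℝ)/((k:ℝ)+2) ≤ Real.log ((k:ℝ)+2) - Real.log ((k:ℝ)+1) := by
    intro k
    have hpos : (0:ℝ) < ((k:ℝ)+1)/((k:ℝ)+2) := by positivity
    have := Real.log_le_sub_one_of_pos hpos
    rw [Real.log_div (by positivity) (by positivity)] at this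
    have he : ((k:ℝ)+1)/((k:ℝ)+2) - 1 = -(1/((k:ℝ)+2)) := by field_simp; norm_num
    rw [he] at this
    linarith
  have htel : ∑ k ∈ Finset.range n, (Real.log ((k:ℝ)+2) - Real.log ((k:ℝ)+1))
      = Real.log ((n:ℝ)+1) := by
    have := Finset.sum_range_sub (fun k : ℕ => Real.log ((k:ℝ)+1)) n
    simp only [Nat.cast_add, Nat.cast_one] at this
    rw [show ∑ k ∈ Finset.range n, (Real.log ((k:ℝ)+2) - Real.log ((k:ℝ)+1))
        = ∑ k ∈ Finset.range n, (Real.log (((k:ℝ)+1)+1) - Real.log ((k:ℝ)+1)) by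
          apply Finset.sum_congr rfl; intro k _; ring_nf]
    rw [this]; simp
  have hsum1 : ∑ k ∈ Finset.range (n+1), (1:ℝ)/((k:ℝ)+1)
      ≤ 1 + Real.log ((n:ℝ)+1) := by
    rw [Finset.sum_range_succ' (fun k : ℕ => (1:ℝ)/((k:ℝ)+1)) n]
    push_cast
    have : ∑ k ∈ Finset.range n, (1:ℝ)/(((k:ℝ)+1)+1) ≤ Real.log ((n:ℝ)+1) := by
      rw [← htel]
      apply Finset.sum_le_sum
      intro k _
      have := hstep k
      have he2 : ((k:ℝ)+1)+1 = (k:ℝ)+2 := by ring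
      rw [he2]
      exact this
    linarith [this]
  have hlog2 : (0.6931471803:ℝ) < Real.log 2 := Real.log_two_gt_d9
  have hn2 : (2:ℝ) ≤ (n:ℝ) := by exact_mod_cast hn
  have hlogn : Real.log 2 ≤ Real.log n := Real.log_le_log (by norm_num) hn2
  have hsq : (n:ℝ)+1 ≤ (n:ℝ)^2 := by nlinarith
  have hlogn1 : Real.log ((n:ℝ)+1) ≤ 2 * Real.log n := by
    calc Real.log ((n:ℝ)+1) ≤ Real.log ((n:ℝ)^2) := Real.log_le_log (by positivity) hsq
      _ = 2 * Real.log n := by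
          rw [show ((n:ℝ)^2) = (n:ℝ)^(2:ℕ) by norm_num, Real.log_pow]; push_cast; ring
  linarith

lemma sqrt_tele (j : ℕ) : ((j:ℝ)+2) ^ (-(3:ℝ)/2)
    ≤ 2*(Real.sqrt ((j:ℝ)+1))⁻¹ - 2*(Real.sqrt ((j:ℝ)+2))⁻¹ := by
  set a := Real.sqrt ((j:ℝ)+1) with hadef
  set b := Real.sqrt ((j:ℝ)+2) with hbdef
  have ha : 0 < a := Real.sqrt_pos.mpr (by positivity)
  have hb : 0 < b := Real.sqrt_pos.mpr (by positivity)
  have hab : a ≤ b := Real.sqrt_le_sqrt (by linarith)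
  have ha2 : a^2 = (j:ℝ)+1 := Real.sq_sqrt (by positivity)
  have hb2 : b^2 = (j:ℝ)+2 := Real.sq_sqrt (by positivity)
  have hx : ((j:ℝ)+2) ^ (-(3:ℝ)/2) = (b^3)⁻¹ := by
    rw [← hb2]
    rw [← Real.rpow_natCast b 2, ← Real.rpow_mul hb.le]
    norm_num
  rw [hx]
  have h1 : 2*a⁻¹ - 2*b⁻¹ = 2*(b-a)/(a*b) := by field_simp
  rw [h1, inv_eq_one_div, div_le_div_iff₀ (by positivity) (by positivity)]
  have hba : (b-a)*(b+a) = 1 := by nlinarith [ha2, hb2]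
  have haux : a*b*(a+b) ≤ 2*b^3 := by nlinarith [mul_pos ha hb]
  have h3 : 2*(b-a)*b^3*(b+a) = 2*b^3 := by linear_combination 2*b^3 * hba
  rw [one_mul, ← mul_le_mul_iff_of_pos_right (show (0:ℝ) < b+a from by linarith)]
  rw [h3]
  nlinarith [haux]

lemma tail_weight (K N : ℕ) :
    ∑ k ∈ Finset.range N, ((1:ℝ)+((k+(K+1):ℕ):ℝ)) ^ (-(3:ℝ)/2)
      ≤ 2 * (Real.sqrt ((K:ℝ)+1))⁻¹ := by
  set φ : ℕ → ℝ := fun k => 2*(Real.sqrt ((k:ℝ)+(K:ℝ)+1))⁻¹ with hφ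
  have hstep : ∀ k : ℕ, ((1:ℝ)+((k+(K+1):ℕ):ℝ)) ^ (-(3:ℝ)/2) ≤ φ k - φ (k+1) := by
    intro k
    have := sqrt_tele (k+K)
    have hc1 : ((1:ℝ)+((k+(K+1):ℕ):ℝ)) = ((k+K:ℕ):ℝ)+2 := by push_cast; ring
    have hc2 : ((k+K:ℕ):ℝ)+1 = (k:ℝ)+(K:ℝ)+1 := by push_cast; ring
    have hc3 : ((k+K:ℕ):ℝ)+2 = ((k+1:ℕ):ℝ)+(K:ℝ)+1 := by push_cast; ring
    rw [hc1]
    calc (((k+K:ℕ):ℝ)+2) ^ (-(3:ℝ)/2)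
        ≤ 2*(Real.sqrt (((k+K:ℕ):ℝ)+1))⁻¹ - 2*(Real.sqrt (((k+K:ℕ):ℝ)+2))⁻¹ := this
      _ = φ k - φ (k+1) := by rw [hc2, hc3]
  calc ∑ k ∈ Finset.range N, ((1:ℝ)+((k+(K+1):ℕ):ℝ)) ^ (-(3:ℝ)/2)
      ≤ ∑ k ∈ Finset.range N, (φ k - φ (k+1)) := Finset.sum_le_sum (fun k _ => hstep k)
    _ = φ 0 - φ N := Finset.sum_range_sub' φ N
    _ ≤ φ 0 := by
        have : 0 ≤ φ N := by
          apply mul_nonneg (by norm_num)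
          exact inv_nonneg.mpr (Real.sqrt_nonneg _)
        linarith
    _ = 2 * (Real.sqrt ((K:ℝ)+1))⁻¹ := by simp [hφ]

lemma finCS (s : Finset ℕ) (a b : ℕ → ℝ) :
    ∑ k ∈ s, a k * b k
      ≤ Real.sqrt (∑ k ∈ s, (a k)^2) * Real.sqrt (∑ k ∈ s, (b k)^2) := by
  rcases le_or_gt (∑ k ∈ s, a k * b k) 0 with hle | hpos
  · exact hle.trans (by positivity)
  · have h := sum_mul_sq_le_sq_mul_sq s a b
    calc ∑ k ∈ s, a k * b k = Real.sqrt ((∑ k ∈ s, a k * b k)^2) :=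
          (Real.sqrt_sq hpos.le).symm
      _ ≤ Real.sqrt ((∑ k ∈ s, (a k)^2) * (∑ k ∈ s, (b k)^2)) := Real.sqrt_le_sqrt h
      _ = _ := Real.sqrt_mul (by positivity) _


lemma rpow_add' (x : ℝ) (hx : 0 < x) {a b c : ℝ} (h : a + b = c) :
    x ^ a * x ^ b = x ^ c := by rw [← Real.rpow_add hx, h]

lemma div_two_rpow {n : ℝ} (hn : 0 < n) (e : ℝ) : (n/2) ^ e = n ^ e * (2:ℝ) ^ (-e) := by
  rw [Real.div_rpow hn.le (by norm_num), div_eq_mul_inv, ← Real.rpow_neg (by norm_num)]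

lemma two_rpow_le {e : ℝ} (he : e ≤ 2) : (2:ℝ) ^ e ≤ 4 := by
  have h1 : (2:ℝ) ^ e ≤ (2:ℝ) ^ (2:ℝ) := Real.rpow_le_rpow_of_exponent_le (by norm_num) he
  have h2 : (2:ℝ) ^ (2:ℝ) = 4 := by
    rw [show (2:ℝ) = ((2:ℕ):ℝ) by norm_num]
    rw [Real.rpow_natCast]
    norm_num
  linarith

set_option maxHeartbeats 2000000 in
/-- If `f ∈ ℓ²_{3/4}` with `∑ f_k = 0` (absolutely convergent series) and
`h_n = ∑_{k=0}^n E_{n-k} f_k`, then `|h_n| = O(n^{-3/4} (log n)^{1/2})`. -/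
theorem stmt0 (f : ℕ → ℝ)
    (hf2 : InEll2 (3/4) f)
    (hf1 : Summable (fun k => |f k|))
    (hsum : (∑' k, f k) = 0)
    (h : ℕ → ℝ)
    (hh : ∀ n, h n = ∑ k ∈ Finset.range (n+1), Ecoef (n-k) * f k) :
    ∃ C > 0, ∀ n : ℕ, 2 ≤ n →
      |h n| ≤ C * (n : ℝ) ^ (-(3:ℝ)/4) * (Real.log n) ^ ((1:ℝ)/2) := by
  classical
  have hw_sum : Summable (fun k : ℕ => ((1:ℝ)+k) ^ ((3:ℝ)/2) * f k^2) := by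
    have he : (2 * (3/4:ℝ)) = (3:ℝ)/2 := by norm_num
    unfold InEll2 at hf2
    rw [he] at hf2
    exact hf2
  set A := ∑' k, ((1:ℝ)+k) ^ ((3:ℝ)/2) * f k^2 with hA
  have htermnn : ∀ k : ℕ, 0 ≤ ((1:ℝ)+k) ^ ((3:ℝ)/2) * f k^2 := fun k =>
    mul_nonneg (Real.rpow_nonneg (by positivity) _) (sq_nonneg _)
  have hA0 : 0 ≤ A := tsum_nonneg htermnn
  have hpartial : ∀ s : Finset ℕ, ∑ k ∈ s, ((1:ℝ)+k) ^ ((3:ℝ)/2) * f k^2 ≤ A :=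
    fun s => Summable.sum_le_tsum s (fun k _ => htermnn k) hw_sum
  have hfs : Summable f := hf1.of_abs
  refine ⟨12 * (Real.sqrt A + 1), by positivity, ?_⟩
  intro n hn
  have hn2 : (2:ℝ) ≤ (n:ℝ) := by exact_mod_cast hn
  have hnpos : (0:ℝ) < n := by linarith
  set K := n / 2 with hK
  have hKn : K + 1 ≤ n := by omega
  have hKr : (K:ℝ) ≤ (n:ℝ)/2 := by
    rw [hK]; exact_mod_cast Nat.cast_div_le
  have hK1 : (n:ℝ)/2 ≤ (K:ℝ)+1 := by
    have h2 : n ≤ 2*K+2 := by omega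
    have h3 := (Nat.cast_le (α := ℝ)).mpr h2
    push_cast at h3
    linarith
  have hhalfpos : (0:ℝ) < (n:ℝ)/2 := by linarith
  have hsplit : h n = (∑ k ∈ range (K+1), (Ecoef (n-k) - Ecoef n) * f k)
      + Ecoef n * (∑ k ∈ range (K+1), f k)
      + ∑ k ∈ Ico (K+1) (n+1), Ecoef (n-k) * f k := by
    have h2 : ∑ k ∈ range (n+1), Ecoef (n-k) * f k
        = ∑ k ∈ range (K+1), Ecoef (n-k) * f k
          + ∑ k ∈ Ico (K+1) (n+1), Ecoef (n-k) * f k := by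
      simp only [range_eq_Ico]
      exact (Finset.sum_Ico_consecutive _ (Nat.zero_le (K+1)) (by omega)).symm
    have h3 : ∑ k ∈ range (K+1), Ecoef (n-k) * f k
        = (∑ k ∈ range (K+1), (Ecoef (n-k) - Ecoef n) * f k)
          + Ecoef n * (∑ k ∈ range (K+1), f k) := by
      rw [Finset.mul_sum, ← Finset.sum_add_distrib]
      apply Finset.sum_congr rfl; intro k _; ring
    rw [hh n, h2, h3]
  have hT1 : |∑ k ∈ range (K+1), (Ecoef (n-k) - Ecoef n) * f k|
      ≤ 2 * Real.sqrt A * (n:ℝ) ^ (-(3:ℝ)/4) := by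
    have hperterm : ∀ k ∈ range (K+1),
        (Ecoef (n-k) - Ecoef n) * |f k|
          ≤ ((1/2) * ((n:ℝ)/2) ^ (-(3:ℝ)/2)) * ((k:ℝ) * |f k|) := by
      intro k hk
      have hkK : k ≤ K := by simpa [Nat.lt_succ_iff] using mem_range.mp hk
      have hkn : k ≤ n := by omega
      have ht := Ecoef_tele (n-k) k
      rw [Nat.sub_add_cancel hkn] at ht
      have hbase : (n:ℝ)/2 ≤ ((n-k:ℕ):ℝ)+1 := by
        rw [Nat.cast_sub hkn]
        have hc : (k:ℝ) ≤ (K:ℝ) := by exact_mod_cast hkK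
        linarith
      have hr : (((n-k:ℕ):ℝ)+1) ^ (-(3:ℝ)/2) ≤ ((n:ℝ)/2) ^ (-(3:ℝ)/2) :=
        Real.rpow_le_rpow_of_nonpos hhalfpos hbase (by norm_num)
      have h5 : Ecoef (n-k) - Ecoef n ≤ (k:ℝ) * (1/2) * ((n:ℝ)/2) ^ (-(3:ℝ)/2) := by
        calc Ecoef (n-k) - Ecoef n
            ≤ (k:ℝ) * (1/2) * (((n-k:ℕ):ℝ)+1) ^ (-(3:ℝ)/2) := ht
          _ ≤ (k:ℝ) * (1/2) * ((n:ℝ)/2) ^ (-(3:ℝ)/2) :=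
              mul_le_mul_of_nonneg_left hr (by positivity)
      calc (Ecoef (n-k) - Ecoef n) * |f k|
          ≤ ((k:ℝ) * (1/2) * ((n:ℝ)/2) ^ (-(3:ℝ)/2)) * |f k| :=
            mul_le_mul_of_nonneg_right h5 (abs_nonneg _)
        _ = ((1/2) * ((n:ℝ)/2) ^ (-(3:ℝ)/2)) * ((k:ℝ) * |f k|) := by ring
    have hCS : ∑ k ∈ range (K+1), (k:ℝ) * |f k| ≤ Real.sqrt A * (n:ℝ) ^ ((3:ℝ)/4) := by
      have heq : ∀ k : ℕ, (k:ℝ) * |f k|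
          = (((1:ℝ)+k) ^ ((3:ℝ)/4) * |f k|) * ((k:ℝ) * ((1:ℝ)+k) ^ (-(3:ℝ)/4)) := by
        intro k
        have hx : (0:ℝ) < 1 + k := by positivity
        have hone : ((1:ℝ)+k) ^ ((3:ℝ)/4) * ((1:ℝ)+k) ^ (-(3:ℝ)/4) = 1 := by
          rw [rpow_add' _ hx (by norm_num : (3:ℝ)/4 + (-(3:ℝ)/4) = 0), Real.rpow_zero]
        calc (k:ℝ) * |f k|
            = ((k:ℝ) * |f k|) * (((1:ℝ)+k) ^ ((3:ℝ)/4) * ((1:ℝ)+k) ^ (-(3:ℝ)/4)) := by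
              rw [hone]; ring
          _ = _ := by ring
      calc ∑ k ∈ range (K+1), (k:ℝ) * |f k|
          = ∑ k ∈ range (K+1),
              (((1:ℝ)+k) ^ ((3:ℝ)/4) * |f k|) * ((k:ℝ) * ((1:ℝ)+k) ^ (-(3:ℝ)/4)) :=
            Finset.sum_congr rfl (fun k _ => heq k)
        _ ≤ Real.sqrt (∑ k ∈ range (K+1), (((1:ℝ)+k) ^ ((3:ℝ)/4) * |f k|)^2)
            * Real.sqrt (∑ k ∈ range (K+1), ((k:ℝ) * ((1:ℝ)+k) ^ (-(3:ℝ)/4))^2) :=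
            finCS _ _ _
        _ ≤ Real.sqrt A * (n:ℝ) ^ ((3:ℝ)/4) := by
            apply mul_le_mul ?_ ?_ (Real.sqrt_nonneg _) (Real.sqrt_nonneg _)
            · apply Real.sqrt_le_sqrt
              have hsq : ∀ k : ℕ,
                  (((1:ℝ)+k) ^ ((3:ℝ)/4) * |f k|)^2 = ((1:ℝ)+k) ^ ((3:ℝ)/2) * f k^2 := by
                intro k
                rw [mul_pow, rpow_sq _ (by positivity), sq_abs]
                norm_num
              rw [Finset.sum_congr rfl (fun k _ => hsq k)]
              exact hpartial _
            · have hsum2 : ∑ k ∈ range (K+1), ((k:ℝ) * ((1:ℝ)+k) ^ (-(3:ℝ)/4))^2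
                  ≤ (n:ℝ) ^ ((3:ℝ)/2) := by
                have hterm : ∀ k ∈ range (K+1),
                    ((k:ℝ) * ((1:ℝ)+k) ^ (-(3:ℝ)/4))^2 ≤ (n:ℝ) ^ ((1:ℝ)/2) := by
                  intro k hk
                  have hkK : k ≤ K := by simpa [Nat.lt_succ_iff] using mem_range.mp hk
                  have hx : (0:ℝ) < 1 + k := by positivity
                  have h1 : ((k:ℝ) * ((1:ℝ)+k) ^ (-(3:ℝ)/4))^2
                      = (k:ℝ)^2 * ((1:ℝ)+k) ^ (-(3:ℝ)/2) := by
                    rw [mul_pow, rpow_sq _ hx]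
                    norm_num
                  rw [h1]
                  have h2 : (k:ℝ)^2 ≤ ((1:ℝ)+k)^2 := by
                    nlinarith [Nat.cast_nonneg (α := ℝ) k]
                  have h3 : (k:ℝ)^2 * ((1:ℝ)+k) ^ (-(3:ℝ)/2)
                      ≤ ((1:ℝ)+k)^2 * ((1:ℝ)+k) ^ (-(3:ℝ)/2) :=
                    mul_le_mul_of_nonneg_right h2 (Real.rpow_nonneg hx.le _)
                  have h4 : ((1:ℝ)+k)^2 * ((1:ℝ)+k) ^ (-(3:ℝ)/2) = ((1:ℝ)+k) ^ ((1:ℝ)/2) := by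
                    rw [← Real.rpow_natCast ((1:ℝ)+k) 2,
                      rpow_add' _ hx (by norm_num : ((2:ℕ):ℝ) + (-(3:ℝ)/2) = (1:ℝ)/2)]
                  have h5 : ((1:ℝ)+k) ^ ((1:ℝ)/2) ≤ (n:ℝ) ^ ((1:ℝ)/2) := by
                    apply Real.rpow_le_rpow hx.le ?_ (by norm_num)
                    have hc : (k:ℝ) ≤ (K:ℝ) := by exact_mod_cast hkK
                    have hKn' : (K:ℝ)+1 ≤ (n:ℝ) := by exact_mod_cast hKn
                    linarith
                  linarith
                calc ∑ k ∈ range (K+1), ((k:ℝ) * ((1:ℝ)+k) ^ (-(3:ℝ)/4))^2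
                    ≤ ∑ _k ∈ range (K+1), (n:ℝ) ^ ((1:ℝ)/2) := Finset.sum_le_sum hterm
                  _ = ((K:ℝ)+1) * (n:ℝ) ^ ((1:ℝ)/2) := by
                      rw [Finset.sum_const, Finset.card_range]
                      push_cast; ring
                  _ ≤ (n:ℝ) * (n:ℝ) ^ ((1:ℝ)/2) := by
                      apply mul_le_mul_of_nonneg_right ?_ (Real.rpow_nonneg hnpos.le _)
                      exact_mod_cast hKn
                  _ = (n:ℝ) ^ ((3:ℝ)/2) := by
                      nth_rewrite 1 [← Real.rpow_one (n:ℝ)]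
                      rw [rpow_add' _ hnpos (by norm_num : (1:ℝ) + (1:ℝ)/2 = (3:ℝ)/2)]
              calc Real.sqrt (∑ k ∈ range (K+1), ((k:ℝ) * ((1:ℝ)+k) ^ (-(3:ℝ)/4))^2)
                  ≤ Real.sqrt ((n:ℝ) ^ ((3:ℝ)/2)) := Real.sqrt_le_sqrt hsum2
                _ = (n:ℝ) ^ ((3:ℝ)/4) := by
                    rw [sqrt_rpow' _ hnpos.le]
                    norm_num
    calc |∑ k ∈ range (K+1), (Ecoef (n-k) - Ecoef n) * f k|
        ≤ ∑ k ∈ range (K+1), |(Ecoef (n-k) - Ecoef n) * f k| :=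
          Finset.abs_sum_le_sum_abs _ _
      _ = ∑ k ∈ range (K+1), (Ecoef (n-k) - Ecoef n) * |f k| := by
          apply Finset.sum_congr rfl
          intro k hk
          have hkK : k ≤ K := by simpa [Nat.lt_succ_iff] using mem_range.mp hk
          have hd : 0 ≤ Ecoef (n-k) - Ecoef n :=
            sub_nonneg.mpr (Ecoef_anti (Nat.sub_le n k))
          rw [abs_mul, abs_of_nonneg hd]
      _ ≤ ∑ k ∈ range (K+1), ((1/2) * ((n:ℝ)/2) ^ (-(3:ℝ)/2)) * ((k:ℝ) * |f k|) :=
          Finset.sum_le_sum hperterm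
      _ = ((1/2) * ((n:ℝ)/2) ^ (-(3:ℝ)/2)) * ∑ k ∈ range (K+1), (k:ℝ) * |f k| := by
          rw [Finset.mul_sum]
      _ ≤ ((1/2) * ((n:ℝ)/2) ^ (-(3:ℝ)/2)) * (Real.sqrt A * (n:ℝ) ^ ((3:ℝ)/4)) := by
          apply mul_le_mul_of_nonneg_left hCS (by positivity)
      _ = ((1/2) * (2:ℝ)^((3:ℝ)/2)) * Real.sqrt A
            * ((n:ℝ) ^ (-(3:ℝ)/2) * (n:ℝ) ^ ((3:ℝ)/4)) := by
          rw [div_two_rpow hnpos]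
          norm_num
          ring
      _ = ((1/2) * (2:ℝ)^((3:ℝ)/2)) * Real.sqrt A * (n:ℝ) ^ (-(3:ℝ)/4) := by
          rw [rpow_add' _ hnpos (by norm_num : -(3:ℝ)/2 + (3:ℝ)/4 = -(3:ℝ)/4)]
      _ ≤ 2 * Real.sqrt A * (n:ℝ) ^ (-(3:ℝ)/4) := by
          have h32 : (2:ℝ)^((3:ℝ)/2) ≤ 4 := two_rpow_le (by norm_num)
          have := Real.rpow_nonneg (show (0:ℝ) ≤ 2 by norm_num) ((3:ℝ)/2)
          have hX : (0:ℝ) ≤ (n:ℝ) ^ (-(3:ℝ)/4) := Real.rpow_nonneg hnpos.le _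
          nlinarith [Real.sqrt_nonneg A, mul_nonneg (Real.sqrt_nonneg A) hX]
  have hT2 : |Ecoef n * (∑ k ∈ range (K+1), f k)|
      ≤ 2 * Real.sqrt A * (n:ℝ) ^ (-(3:ℝ)/4) := by
    have hsA : (0:ℝ) ≤ Real.sqrt A := Real.sqrt_nonneg _
    have hX : (0:ℝ) ≤ (n:ℝ) ^ (-(3:ℝ)/4) := Real.rpow_nonneg hnpos.le _
    have htail_eq : ∑ k ∈ range (K+1), f k = - ∑' k, f (k+(K+1)) := by
      have hs := Summable.sum_add_tsum_nat_add (f := f) (K+1) hfs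
      rw [hsum] at hs
      linarith
    have htailA : ∑' k, ((1:ℝ)+((k+(K+1):ℕ):ℝ)) ^ ((3:ℝ)/2) * f (k+(K+1))^2 ≤ A := by
      have hs2 := Summable.sum_add_tsum_nat_add (f := fun k : ℕ => ((1:ℝ)+k) ^ ((3:ℝ)/2) * f k^2)
        (K+1) hw_sum
      have hpos : 0 ≤ ∑ k ∈ range (K+1), ((1:ℝ)+k) ^ ((3:ℝ)/2) * f k^2 :=
        Finset.sum_nonneg (fun k _ => htermnn k)
      rw [← hA] at hs2
      linarith [hs2]
    have hshiftw : Summable (fun k : ℕ => ((1:ℝ)+((k+(K+1):ℕ):ℝ)) ^ ((3:ℝ)/2) * f (k+(K+1))^2) :=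
      (summable_nat_add_iff (K+1)).mpr hw_sum
    have htail : |∑' k, f (k+(K+1))|
        ≤ Real.sqrt A * Real.sqrt (2 * (Real.sqrt ((K:ℝ)+1))⁻¹) := by
      have habs_sum : Summable (fun k => |f (k+(K+1))|) :=
        (summable_nat_add_iff (K+1)).mpr hf1
      have h1 : |∑' k, f (k+(K+1))| ≤ ∑' k, |f (k+(K+1))| := by
        have h2 := norm_tsum_le_tsum_norm (f := fun k : ℕ => f (k+(K+1)))
          (by simpa [Real.norm_eq_abs] using habs_sum)
        simpa [Real.norm_eq_abs] using h2
      have h2 : ∑' k, |f (k+(K+1))|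
          ≤ Real.sqrt A * Real.sqrt (2 * (Real.sqrt ((K:ℝ)+1))⁻¹) := by
        apply Real.tsum_le_of_sum_range_le (fun k => abs_nonneg _)
        intro N
        have heq : ∀ k : ℕ, |f (k+(K+1))|
            = (((1:ℝ)+((k+(K+1):ℕ):ℝ)) ^ ((3:ℝ)/4) * |f (k+(K+1))|)
              * ((1:ℝ)+((k+(K+1):ℕ):ℝ)) ^ (-(3:ℝ)/4) := by
          intro k
          have hx : (0:ℝ) < 1 + ((k+(K+1):ℕ):ℝ) := by positivity
          have hone : ((1:ℝ)+((k+(K+1):ℕ):ℝ)) ^ ((3:ℝ)/4)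
              * ((1:ℝ)+((k+(K+1):ℕ):ℝ)) ^ (-(3:ℝ)/4) = 1 := by
            rw [rpow_add' _ hx (by norm_num : (3:ℝ)/4 + (-(3:ℝ)/4) = 0), Real.rpow_zero]
          calc |f (k+(K+1))|
              = |f (k+(K+1))| * (((1:ℝ)+((k+(K+1):ℕ):ℝ)) ^ ((3:ℝ)/4)
                  * ((1:ℝ)+((k+(K+1):ℕ):ℝ)) ^ (-(3:ℝ)/4)) := by rw [hone]; ring
            _ = _ := by ring
        calc ∑ k ∈ range N, |f (k+(K+1))|
            = ∑ k ∈ range N, (((1:ℝ)+((k+(K+1):ℕ):ℝ)) ^ ((3:ℝ)/4) * |f (k+(K+1))|)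
                * ((1:ℝ)+((k+(K+1):ℕ):ℝ)) ^ (-(3:ℝ)/4) :=
              Finset.sum_congr rfl (fun k _ => heq k)
          _ ≤ Real.sqrt (∑ k ∈ range N,
                (((1:ℝ)+((k+(K+1):ℕ):ℝ)) ^ ((3:ℝ)/4) * |f (k+(K+1))|)^2)
              * Real.sqrt (∑ k ∈ range N,
                (((1:ℝ)+((k+(K+1):ℕ):ℝ)) ^ (-(3:ℝ)/4))^2) := finCS _ _ _
          _ ≤ Real.sqrt A * Real.sqrt (2 * (Real.sqrt ((K:ℝ)+1))⁻¹) := by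
              apply mul_le_mul ?_ ?_ (Real.sqrt_nonneg _) (Real.sqrt_nonneg _)
              · apply Real.sqrt_le_sqrt
                have hsq : ∀ k : ℕ,
                    (((1:ℝ)+((k+(K+1):ℕ):ℝ)) ^ ((3:ℝ)/4) * |f (k+(K+1))|)^2
                      = ((1:ℝ)+((k+(K+1):ℕ):ℝ)) ^ ((3:ℝ)/2) * f (k+(K+1))^2 := by
                  intro k
                  rw [mul_pow, rpow_sq _ (by positivity), sq_abs]
                  norm_num
                rw [Finset.sum_congr rfl (fun k _ => hsq k)]
                calc ∑ k ∈ range N, ((1:ℝ)+((k+(K+1):ℕ):ℝ)) ^ ((3:ℝ)/2) * f (k+(K+1))^2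
                    ≤ ∑' k, ((1:ℝ)+((k+(K+1):ℕ):ℝ)) ^ ((3:ℝ)/2) * f (k+(K+1))^2 :=
                      Summable.sum_le_tsum _ (fun k _ => mul_nonneg
                        (Real.rpow_nonneg (by positivity) _) (sq_nonneg _)) hshiftw
                  _ ≤ A := htailA
              · apply Real.sqrt_le_sqrt
                have hsq : ∀ k : ℕ,
                    (((1:ℝ)+((k+(K+1):ℕ):ℝ)) ^ (-(3:ℝ)/4))^2
                      = ((1:ℝ)+((k+(K+1):ℕ):ℝ)) ^ (-(3:ℝ)/2) := by
                  intro k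
                  rw [rpow_sq _ (by positivity)]
                  norm_num
                rw [Finset.sum_congr rfl (fun k _ => hsq k)]
                exact tail_weight K N
      exact h1.trans h2
    have hE : Ecoef n ≤ (n:ℝ) ^ (-(1:ℝ)/2) := by
      have h1 := Ecoef_le n
      have h2 : ((n:ℝ)+1) ^ (-(1:ℝ)/2) ≤ (n:ℝ) ^ (-(1:ℝ)/2) :=
        Real.rpow_le_rpow_of_nonpos hnpos (by linarith) (by norm_num)
      linarith
    have hKhalf : Real.sqrt (2 * (Real.sqrt ((K:ℝ)+1))⁻¹)
        ≤ (2:ℝ)^((3:ℝ)/4) * (n:ℝ)^(-(1:ℝ)/4) := by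
      have hs1 : Real.sqrt ((n:ℝ)/2) ≤ Real.sqrt ((K:ℝ)+1) := Real.sqrt_le_sqrt hK1
      have hs1pos : 0 < Real.sqrt ((n:ℝ)/2) := Real.sqrt_pos.mpr hhalfpos
      have hinv : (Real.sqrt ((K:ℝ)+1))⁻¹ ≤ (Real.sqrt ((n:ℝ)/2))⁻¹ :=
        inv_anti₀ hs1pos hs1
      have he1 : (Real.sqrt ((n:ℝ)/2))⁻¹ = ((n:ℝ)/2) ^ (-(1:ℝ)/2) := by
        rw [Real.sqrt_eq_rpow, ← Real.rpow_neg (le_of_lt hhalfpos)]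
        norm_num
      have h21 : (2:ℝ) * (2:ℝ)^((1:ℝ)/2) = (2:ℝ)^((3:ℝ)/2) := by
        nth_rewrite 1 [← Real.rpow_one (2:ℝ)]
        rw [rpow_add' _ (by norm_num) (by norm_num : (1:ℝ) + (1:ℝ)/2 = (3:ℝ)/2)]
      have he2 : 2 * ((n:ℝ)/2) ^ (-(1:ℝ)/2) = (2:ℝ)^((3:ℝ)/2) * (n:ℝ)^(-(1:ℝ)/2) := by
        rw [div_two_rpow hnpos]
        rw [show -(-(1:ℝ)/2) = (1:ℝ)/2 by norm_num]
        rw [← h21]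
        ring
      calc Real.sqrt (2 * (Real.sqrt ((K:ℝ)+1))⁻¹)
          ≤ Real.sqrt (2 * (Real.sqrt ((n:ℝ)/2))⁻¹) := by
            apply Real.sqrt_le_sqrt
            nlinarith [hinv]
        _ = Real.sqrt ((2:ℝ)^((3:ℝ)/2) * (n:ℝ)^(-(1:ℝ)/2)) := by rw [he1, he2]
        _ = (2:ℝ)^((3:ℝ)/4) * (n:ℝ)^(-(1:ℝ)/4) := by
            rw [Real.sqrt_mul (Real.rpow_nonneg (by norm_num) _),
              sqrt_rpow' _ (by norm_num : (0:ℝ) ≤ 2), sqrt_rpow' _ hnpos.le]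
            norm_num
    rw [abs_mul, abs_of_nonneg (Ecoef_pos n).le, htail_eq, abs_neg]
    have hrt : (0:ℝ) ≤ (n:ℝ)^(-(1:ℝ)/2) := Real.rpow_nonneg hnpos.le _
    calc Ecoef n * |∑' k, f (k+(K+1))|
        ≤ (n:ℝ)^(-(1:ℝ)/2) * (Real.sqrt A * ((2:ℝ)^((3:ℝ)/4) * (n:ℝ)^(-(1:ℝ)/4))) := by
          apply mul_le_mul hE ?_ (abs_nonneg _) hrt
          exact htail.trans (mul_le_mul_of_nonneg_left hKhalf hsA)
      _ = (2:ℝ)^((3:ℝ)/4) * Real.sqrt A * ((n:ℝ)^(-(1:ℝ)/2) * (n:ℝ)^(-(1:ℝ)/4)) := by ring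
      _ = (2:ℝ)^((3:ℝ)/4) * Real.sqrt A * (n:ℝ)^(-(3:ℝ)/4) := by
          rw [rpow_add' _ hnpos (by norm_num : -(1:ℝ)/2 + -(1:ℝ)/4 = -(3:ℝ)/4)]
      _ ≤ 2 * Real.sqrt A * (n:ℝ)^(-(3:ℝ)/4) := by
          have h34 : (2:ℝ)^((3:ℝ)/4) ≤ 2 := by
            have h1 : (2:ℝ)^((3:ℝ)/4) ≤ (2:ℝ)^(1:ℝ) :=
              Real.rpow_le_rpow_of_exponent_le (by norm_num) (by norm_num)
            rwa [Real.rpow_one] at h1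
          nlinarith [mul_nonneg hsA hX]
  have hT3 : |∑ k ∈ Ico (K+1) (n+1), Ecoef (n-k) * f k|
      ≤ 4 * Real.sqrt A * ((n:ℝ) ^ (-(3:ℝ)/4) * Real.log n ^ ((1:ℝ)/2)) := by
    have hsA : (0:ℝ) ≤ Real.sqrt A := Real.sqrt_nonneg _
    have hlogn : (0:ℝ) < Real.log n := Real.log_pos (by linarith)
    have step1 : |∑ k ∈ Ico (K+1) (n+1), Ecoef (n-k) * f k|
        ≤ ∑ k ∈ Ico (K+1) (n+1),
            (((1:ℝ)+k) ^ ((3:ℝ)/4) * |f k|) * (Ecoef (n-k) * ((1:ℝ)+k) ^ (-(3:ℝ)/4)) := by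
      calc |∑ k ∈ Ico (K+1) (n+1), Ecoef (n-k) * f k|
          ≤ ∑ k ∈ Ico (K+1) (n+1), |Ecoef (n-k) * f k| := Finset.abs_sum_le_sum_abs _ _
        _ = ∑ k ∈ Ico (K+1) (n+1),
              (((1:ℝ)+k) ^ ((3:ℝ)/4) * |f k|) * (Ecoef (n-k) * ((1:ℝ)+k) ^ (-(3:ℝ)/4)) := by
            apply Finset.sum_congr rfl
            intro k _
            have hx : (0:ℝ) < 1 + k := by positivity
            have hone : ((1:ℝ)+k) ^ ((3:ℝ)/4) * ((1:ℝ)+k) ^ (-(3:ℝ)/4) = 1 := by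
              rw [rpow_add' _ hx (by norm_num : (3:ℝ)/4 + (-(3:ℝ)/4) = 0), Real.rpow_zero]
            calc |Ecoef (n-k) * f k| = Ecoef (n-k) * |f k| := by
                  rw [abs_mul, abs_of_nonneg (Ecoef_pos _).le]
              _ = (Ecoef (n-k) * |f k|)
                  * (((1:ℝ)+k) ^ ((3:ℝ)/4) * ((1:ℝ)+k) ^ (-(3:ℝ)/4)) := by rw [hone]; ring
              _ = _ := by ring
    have hQ : ∑ k ∈ Ico (K+1) (n+1), (Ecoef (n-k) * ((1:ℝ)+k) ^ (-(3:ℝ)/4))^2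
        ≤ ((n:ℝ)/2) ^ (-(3:ℝ)/2) * (4 * Real.log n) := by
      have hterm : ∀ k ∈ Ico (K+1) (n+1),
          (Ecoef (n-k) * ((1:ℝ)+k) ^ (-(3:ℝ)/4))^2
            ≤ ((n:ℝ)/2) ^ (-(3:ℝ)/2) * ((1:ℝ)/((((n-k:ℕ)):ℝ)+1)) := by
        intro k hk
        obtain ⟨hk1, hk2⟩ := Finset.mem_Ico.mp hk
        have hx : (0:ℝ) < 1 + k := by positivity
        have hsq : (Ecoef (n-k) * ((1:ℝ)+k) ^ (-(3:ℝ)/4))^2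
            = Ecoef (n-k)^2 * ((1:ℝ)+k) ^ (-(3:ℝ)/2) := by
          rw [mul_pow, rpow_sq _ hx]
          norm_num
        rw [hsq]
        have hEb : Ecoef (n-k)^2 ≤ 1/((((n-k:ℕ)):ℝ)+1) := Ecoef_sq' (n-k)
        have hbase : (n:ℝ)/2 ≤ (1:ℝ)+k := by
          have hc : (K:ℝ)+1 ≤ (k:ℝ) := by exact_mod_cast hk1
          linarith [hK1]
        have hw2 : ((1:ℝ)+k) ^ (-(3:ℝ)/2) ≤ ((n:ℝ)/2) ^ (-(3:ℝ)/2) :=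
          Real.rpow_le_rpow_of_nonpos hhalfpos hbase (by norm_num)
        have hcomb := mul_le_mul hEb hw2 (Real.rpow_nonneg hx.le _) (by positivity)
        calc Ecoef (n-k)^2 * ((1:ℝ)+k) ^ (-(3:ℝ)/2)
            ≤ 1/((((n-k:ℕ)):ℝ)+1) * ((n:ℝ)/2) ^ (-(3:ℝ)/2) := hcomb
          _ = ((n:ℝ)/2) ^ (-(3:ℝ)/2) * ((1:ℝ)/((((n-k:ℕ)):ℝ)+1)) := by ring
      have hharm : ∑ k ∈ Ico (K+1) (n+1), (1:ℝ)/((((n-k:ℕ)):ℝ)+1) ≤ 4 * Real.log n := by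
        have hsub : ∑ k ∈ Ico (K+1) (n+1), (1:ℝ)/((((n-k:ℕ)):ℝ)+1)
            ≤ ∑ k ∈ range (n+1), (1:ℝ)/((((n-k:ℕ)):ℝ)+1) := by
          apply Finset.sum_le_sum_of_subset_of_nonneg
          · rw [range_eq_Ico]
            exact Finset.Ico_subset_Ico (Nat.zero_le _) le_rfl
          · intro k _ _
            positivity
        have hrefl := Finset.sum_range_reflect (fun j : ℕ => (1:ℝ)/((j:ℝ)+1)) (n+1)
        simp only [Nat.add_sub_cancel] at hrefl
        calc ∑ k ∈ Ico (K+1) (n+1), (1:ℝ)/((((n-k:ℕ)):ℝ)+1)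
            ≤ ∑ k ∈ range (n+1), (1:ℝ)/((((n-k:ℕ)):ℝ)+1) := hsub
          _ = ∑ k ∈ range (n+1), (1:ℝ)/((k:ℝ)+1) := hrefl
          _ ≤ 4 * Real.log n := harmonic_le n hn
      calc ∑ k ∈ Ico (K+1) (n+1), (Ecoef (n-k) * ((1:ℝ)+k) ^ (-(3:ℝ)/4))^2
          ≤ ∑ k ∈ Ico (K+1) (n+1),
              ((n:ℝ)/2) ^ (-(3:ℝ)/2) * ((1:ℝ)/((((n-k:ℕ)):ℝ)+1)) :=
            Finset.sum_le_sum hterm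
        _ = ((n:ℝ)/2) ^ (-(3:ℝ)/2)
              * ∑ k ∈ Ico (K+1) (n+1), (1:ℝ)/((((n-k:ℕ)):ℝ)+1) := by
            rw [Finset.mul_sum]
        _ ≤ ((n:ℝ)/2) ^ (-(3:ℝ)/2) * (4 * Real.log n) :=
            mul_le_mul_of_nonneg_left hharm (Real.rpow_nonneg hhalfpos.le _)
    have hCS : ∑ k ∈ Ico (K+1) (n+1),
        (((1:ℝ)+k) ^ ((3:ℝ)/4) * |f k|) * (Ecoef (n-k) * ((1:ℝ)+k) ^ (-(3:ℝ)/4))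
        ≤ Real.sqrt A * Real.sqrt (((n:ℝ)/2) ^ (-(3:ℝ)/2) * (4 * Real.log n)) := by
      calc ∑ k ∈ Ico (K+1) (n+1),
            (((1:ℝ)+k) ^ ((3:ℝ)/4) * |f k|) * (Ecoef (n-k) * ((1:ℝ)+k) ^ (-(3:ℝ)/4))
          ≤ Real.sqrt (∑ k ∈ Ico (K+1) (n+1), (((1:ℝ)+k) ^ ((3:ℝ)/4) * |f k|)^2)
            * Real.sqrt (∑ k ∈ Ico (K+1) (n+1),
                (Ecoef (n-k) * ((1:ℝ)+k) ^ (-(3:ℝ)/4))^2) := finCS _ _ _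
        _ ≤ Real.sqrt A * Real.sqrt (((n:ℝ)/2) ^ (-(3:ℝ)/2) * (4 * Real.log n)) := by
            apply mul_le_mul ?_ (Real.sqrt_le_sqrt hQ) (Real.sqrt_nonneg _) hsA
            apply Real.sqrt_le_sqrt
            have hsq : ∀ k : ℕ,
                (((1:ℝ)+k) ^ ((3:ℝ)/4) * |f k|)^2 = ((1:ℝ)+k) ^ ((3:ℝ)/2) * f k^2 := by
              intro k
              rw [mul_pow, rpow_sq _ (by positivity), sq_abs]
              norm_num
            rw [Finset.sum_congr rfl (fun k _ => hsq k)]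
            exact hpartial _
    have hroot : Real.sqrt (((n:ℝ)/2) ^ (-(3:ℝ)/2) * (4 * Real.log n))
        ≤ 4 * ((n:ℝ) ^ (-(3:ℝ)/4) * Real.log n ^ ((1:ℝ)/2)) := by
      rw [Real.sqrt_mul (Real.rpow_nonneg hhalfpos.le _)]
      have h1 : Real.sqrt (((n:ℝ)/2) ^ (-(3:ℝ)/2)) ≤ 2 * (n:ℝ) ^ (-(3:ℝ)/4) := by
        rw [sqrt_rpow' _ hhalfpos.le]
        rw [show (-(3:ℝ)/2)/2 = -(3:ℝ)/4 by norm_num]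
        rw [div_two_rpow hnpos]
        rw [show -(-(3:ℝ)/4) = (3:ℝ)/4 by norm_num]
        have h34 : (2:ℝ)^((3:ℝ)/4) ≤ 2 := by
          have h1 : (2:ℝ)^((3:ℝ)/4) ≤ (2:ℝ)^(1:ℝ) :=
            Real.rpow_le_rpow_of_exponent_le (by norm_num) (by norm_num)
          rwa [Real.rpow_one] at h1
        have hX : (0:ℝ) ≤ (n:ℝ) ^ (-(3:ℝ)/4) := Real.rpow_nonneg hnpos.le _
        nlinarith
      have h2 : Real.sqrt (4 * Real.log n) = 2 * Real.log n ^ ((1:ℝ)/2) := by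
        rw [Real.sqrt_mul (by norm_num : (0:ℝ) ≤ 4), Real.sqrt_eq_rpow (Real.log n)]
        rw [show (4:ℝ) = 2^2 by norm_num, Real.sqrt_sq (by norm_num : (0:ℝ) ≤ 2)]
      rw [h2]
      have hL : (0:ℝ) ≤ Real.log n ^ ((1:ℝ)/2) := Real.rpow_nonneg hlogn.le _
      calc Real.sqrt (((n:ℝ)/2) ^ (-(3:ℝ)/2)) * (2 * Real.log n ^ ((1:ℝ)/2))
          ≤ (2 * (n:ℝ) ^ (-(3:ℝ)/4)) * (2 * Real.log n ^ ((1:ℝ)/2)) := by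
            apply mul_le_mul_of_nonneg_right h1 (by positivity)
        _ = 4 * ((n:ℝ) ^ (-(3:ℝ)/4) * Real.log n ^ ((1:ℝ)/2)) := by ring
    calc |∑ k ∈ Ico (K+1) (n+1), Ecoef (n-k) * f k|
        ≤ ∑ k ∈ Ico (K+1) (n+1),
            (((1:ℝ)+k) ^ ((3:ℝ)/4) * |f k|) * (Ecoef (n-k) * ((1:ℝ)+k) ^ (-(3:ℝ)/4)) := step1
      _ ≤ Real.sqrt A * Real.sqrt (((n:ℝ)/2) ^ (-(3:ℝ)/2) * (4 * Real.log n)) := hCS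
      _ ≤ Real.sqrt A * (4 * ((n:ℝ) ^ (-(3:ℝ)/4) * Real.log n ^ ((1:ℝ)/2))) :=
          mul_le_mul_of_nonneg_left hroot hsA
      _ = 4 * Real.sqrt A * ((n:ℝ) ^ (-(3:ℝ)/4) * Real.log n ^ ((1:ℝ)/2)) := by ring
  have hlog : (1:ℝ)/4 ≤ Real.log n := by
    have hlog2 : (0.6931471803:ℝ) < Real.log 2 := Real.log_two_gt_d9
    have := Real.log_le_log (by norm_num : (0:ℝ) < 2) hn2
    linarith
  have hhalf : (1:ℝ)/2 ≤ Real.log n ^ ((1:ℝ)/2) := by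
    have h1 : ((1:ℝ)/4) ^ ((1:ℝ)/2) ≤ Real.log n ^ ((1:ℝ)/2) :=
      Real.rpow_le_rpow (by norm_num) hlog (by norm_num)
    have h2 : ((1:ℝ)/4) ^ ((1:ℝ)/2) = 1/2 := by
      rw [← Real.sqrt_eq_rpow, show (1/4:ℝ) = (1/2)^2 by norm_num,
        Real.sqrt_sq (by norm_num)]
    linarith
  have hXpos : (0:ℝ) ≤ (n:ℝ) ^ (-(3:ℝ)/4) := Real.rpow_nonneg hnpos.le _
  have hbridge : (n:ℝ) ^ (-(3:ℝ)/4)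
      ≤ 2 * ((n:ℝ) ^ (-(3:ℝ)/4) * Real.log n ^ ((1:ℝ)/2)) := by
    nlinarith [hXpos, hhalf]
  have habs : |h n| ≤ |∑ k ∈ range (K+1), (Ecoef (n-k) - Ecoef n) * f k|
      + |Ecoef n * (∑ k ∈ range (K+1), f k)|
      + |∑ k ∈ Ico (K+1) (n+1), Ecoef (n-k) * f k| := by
    rw [hsplit]
    exact (abs_add_le _ _).trans (add_le_add_left (abs_add_le _ _) _)
  have hsA : (0:ℝ) ≤ Real.sqrt A := Real.sqrt_nonneg _
  calc |h n| ≤ (2 * Real.sqrt A * (n:ℝ) ^ (-(3:ℝ)/4))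
        + (2 * Real.sqrt A * (n:ℝ) ^ (-(3:ℝ)/4))
        + (4 * Real.sqrt A * ((n:ℝ) ^ (-(3:ℝ)/4) * Real.log n ^ ((1:ℝ)/2))) := by
        linarith [habs, hT1, hT2, hT3]
    _ ≤ 12 * (Real.sqrt A + 1) * ((n:ℝ) ^ (-(3:ℝ)/4) * Real.log n ^ ((1:ℝ)/2)) := by
        have hY : (0:ℝ) ≤ (n:ℝ) ^ (-(3:ℝ)/4) * Real.log n ^ ((1:ℝ)/2) :=
          mul_nonneg hXpos (Real.rpow_nonneg (Real.log_nonneg (by linarith)) _)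
        have h2 : 2 * Real.sqrt A * ((n:ℝ) ^ (-(3:ℝ)/4))
            ≤ 2 * Real.sqrt A * (2 * ((n:ℝ) ^ (-(3:ℝ)/4) * Real.log n ^ ((1:ℝ)/2))) :=
          mul_le_mul_of_nonneg_left hbridge (by positivity)
        nlinarith [h2, hY, hsA, mul_nonneg hsA hY]
    _ = 12 * (Real.sqrt A + 1) * (n:ℝ) ^ (-(3:ℝ)/4) * Real.log n ^ ((1:ℝ)/2) := by ring
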